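/- arXiv:1907.09850 — 5 statements merged into one kernel-verified Lean document; each statement's English description precedes it below -/
import Mathlib

section
/- Let A be a symmetric n×n real matrix (indexed 1..n), and extend a_{kl} = 0 whenever k or l is outside {1,...,n}. Define g_{kl} = -(1/2)(a_{kl} + a_{k+1,l+1} - a_{k,l+1} - a_{k+1,l}) for k,l in {0,...,n}. Then for all x_0,...,x_n ∈ ℝ, with y_k = x_k - x_{k-1} for k = 1,...,n, we have ∑_{k,l=1}^n a_{kl} y_k y_l = ∑_{k,l=0}^n g_{kl} (x_k - x_l)^2. -/
/-!
Summation by parts in each index, whose boundary terms vanish because `a` vanishes at `0` and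
`n + 1`, turns the left side into `∑ (a k l + a (k+1) (l+1) - a k (l+1) - a (k+1) l) x k x l`,
that is `-2 ∑ g k l x k x l`. The same vanishing makes every row sum of `g` telescope to `0`, so
the squares `x k ^ 2`, `x l ^ 2` drop out of `∑ g k l (x k - x l) ^ 2`, which is therefore
`-2 ∑ g k l x k x l` too.
-/

open Finset

section

variable {R : Type*} [CommRing R]

theorem Int.sum_Icc_by_parts_of_eq_zero (f x : ℤ → R) {m n : ℤ} (hm : f m = 0)
    (hn : f (n + 1) = 0) :
    ∑ k ∈ Icc (m + 1) n, f k * (x k - x (k - 1)) = ∑ k ∈ Icc m n, (f k - f (k + 1)) * x k := by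
  have hlow : ∑ k ∈ Icc (m + 1) n, f k * x k = ∑ k ∈ Icc m n, f k * x k :=
    sum_subset (Icc_subset_Icc_left (by omega)) fun k hk hk' => by
      obtain rfl : k = m := by simp only [mem_Icc] at hk hk'; omega
      rw [hm, zero_mul]
  have hhigh :
      ∑ k ∈ Icc (m + 1) (n + 1), f k * x (k - 1) = ∑ k ∈ Icc (m + 1) n, f k * x (k - 1) :=
    (sum_subset (Icc_subset_Icc_right (by omega)) fun k hk hk' => by
      obtain rfl : k = n + 1 := by simp only [mem_Icc] at hk hk'; omega
      rw [hn, zero_mul]).symm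
  have hshift : ∑ k ∈ Icc m n, f (k + 1) * x k = ∑ k ∈ Icc (m + 1) n, f k * x (k - 1) := by
    rw [← hhigh, ← map_add_right_Icc, sum_map]
    simp
  simp only [mul_sub, sub_mul, sum_sub_distrib, hlow, hshift]

theorem Int.sum_Icc_sub_succ_of_eq_zero (f : ℤ → R) {m n : ℤ} (hm : f m = 0)
    (hn : f (n + 1) = 0) : ∑ k ∈ Icc m n, (f k - f (k + 1)) = 0 := by
  simpa using (Int.sum_Icc_by_parts_of_eq_zero f (fun _ => 1) hm hn).symm

theorem Int.sum_Icc_sum_Icc_by_parts_of_eq_zero (a : ℤ → ℤ → R) (x : ℤ → R) {m n : ℤ}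
    (hm_row : ∀ l, a m l = 0) (hm_col : ∀ k, a k m = 0)
    (hn_row : ∀ l, a (n + 1) l = 0) (hn_col : ∀ k, a k (n + 1) = 0) :
    ∑ k ∈ Icc (m + 1) n, ∑ l ∈ Icc (m + 1) n, a k l * (x k - x (k - 1)) * (x l - x (l - 1))
      = ∑ k ∈ Icc m n, ∑ l ∈ Icc m n,
          (a k l + a (k + 1) (l + 1) - a k (l + 1) - a (k + 1) l) * x k * x l := by
  set F : ℤ → R := fun k => ∑ l ∈ Icc m n, (a k l - a k (l + 1)) * x l
  have hrow : ∀ k, ∑ l ∈ Icc (m + 1) n, a k l * (x k - x (k - 1)) * (x l - x (l - 1))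
      = F k * (x k - x (k - 1)) := fun k => by
    simp_rw [F, ← Int.sum_Icc_by_parts_of_eq_zero (a k) x (hm_col k) (hn_col k), sum_mul]
    exact sum_congr rfl fun l _ => by ring
  have hF : ∀ k, F k - F (k + 1) = ∑ l ∈ Icc m n,
      (a k l + a (k + 1) (l + 1) - a k (l + 1) - a (k + 1) l) * x l := fun k => by
    rw [← sum_sub_distrib]
    exact sum_congr rfl fun l _ => by ring
  have hF_m : F m = 0 := by simp [F, hm_row]
  have hF_n : F (n + 1) = 0 := by simp [F, hn_row]
  simp_rw [hrow, Int.sum_Icc_by_parts_of_eq_zero F x hF_m hF_n, hF, sum_mul]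
  exact sum_congr rfl fun k _ => sum_congr rfl fun l _ => by ring

end

theorem Finset.sum_sum_mul_sub_sq_of_sum_eq_zero {ι R : Type*} [CommRing R] (s : Finset ι)
    (g : ι → ι → R) (x : ι → R) (hsymm : ∀ k l, g k l = g l k)
    (hrow : ∀ k ∈ s, ∑ l ∈ s, g k l = 0) :
    ∑ k ∈ s, ∑ l ∈ s, g k l * (x k - x l) ^ 2 = -2 * ∑ k ∈ s, ∑ l ∈ s, g k l * x k * x l := by
  have hsq : ∀ k l, g k l * (x k - x l) ^ 2
      = g k l * x k ^ 2 + g l k * x l ^ 2 - 2 * (g k l * x k * x l) := fun k l => by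
    rw [hsymm l k]; ring
  have hdiag : ∑ k ∈ s, ∑ l ∈ s, g k l * x k ^ 2 = 0 :=
    sum_eq_zero fun k hk => by rw [← sum_mul, hrow k hk, zero_mul]
  simp only [hsq, sum_sub_distrib, sum_add_distrib, ← mul_sum]
  rw [sum_comm (f := fun k l => g l k * x l ^ 2), hdiag]
  ring

/-- Energy form in increments equals sum of harmonic couplings in positions. -/
theorem energy_increment_to_position (n : ℕ) (a : ℤ → ℤ → ℝ)
    (hsym : ∀ k l, a k l = a l k)
    (hzero : ∀ k l : ℤ, (k < 1 ∨ (n : ℤ) < k ∨ l < 1 ∨ (n : ℤ) < l) → a k l = 0)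
    (g : ℤ → ℤ → ℝ)
    (hg : ∀ k l : ℤ, g k l = -(1/2) * (a k l + a (k+1) (l+1) - a k (l+1) - a (k+1) l))
    (x : ℤ → ℝ) (y : ℤ → ℝ) (hy : ∀ k : ℤ, y k = x k - x (k-1)) :
    ∑ k ∈ Finset.Icc (1:ℤ) n, ∑ l ∈ Finset.Icc (1:ℤ) n, a k l * y k * y l
      = ∑ k ∈ Finset.Icc (0:ℤ) n, ∑ l ∈ Finset.Icc (0:ℤ) n, g k l * (x k - x l)^2 := by
  have h0_row : ∀ l, a 0 l = 0 := fun l => hzero _ _ (by omega)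
  have h0_col : ∀ k, a k 0 = 0 := fun k => hzero _ _ (by omega)
  have hn_row : ∀ l, a (n + 1) l = 0 := fun l => hzero _ _ (by omega)
  have hn_col : ∀ k, a k (n + 1) = 0 := fun k => hzero _ _ (by omega)
  have gsymm : ∀ k l, g k l = g l k := fun k l => by
    rw [hg, hg, hsym k l, hsym (k + 1) (l + 1), hsym k (l + 1), hsym (k + 1) l]; ring
  have grow : ∀ k ∈ Icc (0 : ℤ) n, ∑ l ∈ Icc (0 : ℤ) n, g k l = 0 := fun k _ => calc
    ∑ l ∈ Icc (0 : ℤ) n, g k l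
        = -(1 / 2) * ∑ l ∈ Icc (0 : ℤ) n,
            ((a k l - a (k + 1) l) - (a k (l + 1) - a (k + 1) (l + 1))) := by
      rw [mul_sum]; exact sum_congr rfl fun l _ => by rw [hg]; ring
    _ = 0 := by
      rw [Int.sum_Icc_sub_succ_of_eq_zero (fun l => a k l - a (k + 1) l) (by simp [h0_col])
        (by simp [hn_col]), mul_zero]
  have hlhs := Int.sum_Icc_sum_Icc_by_parts_of_eq_zero a x h0_row h0_col hn_row hn_col
  rw [zero_add] at hlhs
  rw [sum_sum_mul_sub_sq_of_sum_eq_zero _ g x gsymm grow]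
  simp only [hy, hlhs, mul_sum]
  exact sum_congr rfl fun k _ => sum_congr rfl fun l _ => by rw [hg]; ring
end

section
/- Let n ≥ 5 and consider H = circ(2(g_1+g_2), -g_1, -g_2, 0, ..., 0, -g_2, -g_1), an (n+1)×(n+1) circulant matrix, with g_1 > 0. If g_2 ≥ -g_1/4, then every eigenvalue λ_m = 2g_1(1 - cos(2πm/(n+1))) + 2g_2(1 - cos(4πm/(n+1))) is nonnegative, and λ_m > 0 for all m ≠ 0. -/
open Real in
/-- Positivity of the spectrum of the cyclic two-coupling polymer energy matrix
when `g₂ ≥ -g₁/4`. -/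
theorem two_coupling_spectrum_nonneg (n : ℕ) (hn : 5 ≤ n) (g1 g2 : ℝ)
    (hg1 : 0 < g1) (hg2 : g2 ≥ -g1 / 4)
    (lam : ℕ → ℝ)
    (hlam : ∀ m, lam m = 2 * g1 * (1 - Real.cos (2 * π * m / (n+1)))
        + 2 * g2 * (1 - Real.cos (4 * π * m / (n+1)))) :
    ∀ m : ℕ, m ≤ n → (0 ≤ lam m ∧ (m ≠ 0 → 0 < lam m)) := by
  intro m hm
  set θ : ℝ := 2 * π * m / (n+1) with hθ
  have hdouble : (4 : ℝ) * π * m / (n+1) = 2 * θ := by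
    rw [hθ]; ring
  set c : ℝ := Real.cos θ with hc
  have hlam' : lam m = 2 * (1 - c) * (g1 + 2 * g2 * (1 + c)) := by
    rw [hlam m, hdouble, Real.cos_two_mul]
    ring
  have hc1 : c ≤ 1 := Real.cos_le_one θ
  have hc2 : -1 ≤ c := Real.neg_one_le_cos θ
  constructor
  · rw [hlam']
    nlinarith [sq_nonneg (1 - c), sq_nonneg (1 + c), mul_nonneg (sub_nonneg.2 hc1) (by linarith : (0:ℝ) ≤ 1 + c)]
  · intro hm0
    have hn1 : (0:ℝ) < (n:ℝ) + 1 := by positivity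
    have hθpos : 0 < θ := by
      rw [hθ]
      have : (0:ℝ) < (m:ℝ) := by
        exact_mod_cast Nat.pos_of_ne_zero hm0
      positivity
    have hθlt : θ < 2 * π := by
      rw [hθ, div_lt_iff₀ hn1]
      have hmn : (m:ℝ) < (n:ℝ) + 1 := by exact_mod_cast Nat.lt_succ_of_le hm
      nlinarith [Real.pi_pos]
    have hcne : c ≠ 1 := by
      intro h
      have := (Real.cos_eq_one_iff_of_lt_of_lt (by linarith [Real.pi_pos] : -(2*π) < θ) hθlt).1 h
      linarith
    have hclt : c < 1 := lt_of_le_of_ne hc1 hcne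
    rw [hlam']
    nlinarith [mul_nonneg (mul_nonneg (sub_pos.2 hclt).le (by linarith : (0:ℝ) ≤ g2 + g1/4)) (by linarith : (0:ℝ) ≤ 1 + c), mul_pos (mul_pos (sub_pos.2 hclt) (sub_pos.2 hclt)) hg1]
end

section
/- For every real c ≥ -1/4, the function f(x) = 1 - cos(2πx) + c(1 - cos(4πx)) is nonnegative for all x ∈ ℝ, and if c > -1/4 then f(x) > 0 for all x not an integer. -/
lemma double_angle (x : ℝ) :
    Real.cos (4 * Real.pi * x) = 2 * Real.cos (2 * Real.pi * x) ^ 2 - 1 := by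
  have : (4 : ℝ) * Real.pi * x = 2 * (2 * Real.pi * x) := by ring
  rw [this, Real.cos_two_mul]

open Real in
/-- Nonnegativity (and strict positivity off the integers) of the symbol function
`f(x) = 1 - cos(2πx) + c(1 - cos(4πx))` for `c ≥ -1/4`. -/
theorem symbol_function_nonneg (c : ℝ) (hc : c ≥ -(1/4)) :
    (∀ x : ℝ, 0 ≤ 1 - Real.cos (2 * π * x) + c * (1 - Real.cos (4 * π * x)))
    ∧ (c > -(1/4) → ∀ x : ℝ, (∀ k : ℤ, x ≠ k) →
        0 < 1 - Real.cos (2 * π * x) + c * (1 - Real.cos (4 * π * x))) := by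
  constructor
  · intro x
    rw [double_angle]
    set u := Real.cos (2 * π * x) with hu
    have h1 : -1 ≤ u := Real.neg_one_le_cos _
    have h2 : u ≤ 1 := Real.cos_le_one _
    nlinarith [mul_nonneg (sub_nonneg.2 h2) (by linarith : (0:ℝ) ≤ 1 + u),
      sq_nonneg (1 - u), sq_nonneg (1 + u)]
  · intro hc' x hx
    rw [double_angle]
    have hlt : Real.cos (2 * π * x) < 1 := by
      rcases lt_or_eq_of_le (Real.cos_le_one (2 * π * x)) with h | h
      · exact h
      · exfalso
        rw [Real.cos_eq_one_iff] at h
        obtain ⟨n, hn⟩ := h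
        have hpi : (0:ℝ) < π := Real.pi_pos
        have hne : (2 * π : ℝ) ≠ 0 := by positivity
        have : x = (n : ℝ) := by
          have h2 : (2 * π) * (n : ℝ) = (2 * π) * x := by linarith
          exact (mul_left_cancel₀ hne h2).symm
        exact hx n this
    set u := Real.cos (2 * π * x) with hu
    have h1 : -1 ≤ u := Real.neg_one_le_cos _
    nlinarith [mul_pos (sub_pos.2 hlt) (by linarith : (0:ℝ) < 3 - u),
      mul_nonneg (sub_nonneg.2 hlt.le) (by linarith : (0:ℝ) ≤ 1 + u),
      sq_nonneg (1 + u), mul_pos (sub_pos.2 hlt) (sub_pos.2 hlt)]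
end

section
/- Let k ≥ 2 and g_1 > 0, g_k ∈ ℝ. If k² g_k / g_1 ≥ -1, then for all x ∈ [0,1], g_1(1 - cos(2πx)) + g_k(1 - cos(2πkx)) ≥ 0. -/
open Real in
lemma abs_sin_nat_mul_le' (n : ℕ) (x : ℝ) : |Real.sin (n * x)| ≤ n * |Real.sin x| := by
  induction n with
  | zero => simp
  | succ n ih =>
    have : ((n : ℝ) + 1) * x = n * x + x := by ring
    push_cast
    rw [this, Real.sin_add]
    calc |Real.sin (n*x) * Real.cos x + Real.cos (n*x) * Real.sin x|
        ≤ |Real.sin (n*x) * Real.cos x| + |Real.cos (n*x) * Real.sin x| := abs_add_le _ _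
      _ ≤ |Real.sin (n*x)| + |Real.sin x| := by
          rw [abs_mul, abs_mul]
          gcongr
          · calc |Real.sin (n*x)| * |Real.cos x| ≤ |Real.sin (n*x)| * 1 := by
                  gcongr; exact Real.abs_cos_le_one x
              _ = |Real.sin (n*x)| := mul_one _
          · calc |Real.cos (n*x)| * |Real.sin x| ≤ 1 * |Real.sin x| := by
                  gcongr; exact Real.abs_cos_le_one _
              _ = |Real.sin x| := one_mul _
      _ ≤ n * |Real.sin x| + |Real.sin x| := by gcongr
      _ = (n + 1) * |Real.sin x| := by ring

open Real in
lemma one_sub_cos_nat_mul_le (n : ℕ) (x : ℝ) :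
    1 - Real.cos (n * x) ≤ (n:ℝ)^2 * (1 - Real.cos x) := by
  have h1 : 1 - Real.cos (n * x) = 2 * Real.sin (n * (x/2))^2 := by
    have := Real.cos_two_mul (n * (x/2))
    have hx : 2 * (n * (x/2)) = n * x := by ring
    rw [hx] at this
    have hs := Real.sin_sq_add_cos_sq (n * (x/2))
    nlinarith
  have h2 : 1 - Real.cos x = 2 * Real.sin (x/2)^2 := by
    have := Real.cos_two_mul (x/2)
    have hx : 2 * (x/2) = x := by ring
    rw [hx] at this
    have hs := Real.sin_sq_add_cos_sq (x/2)
    nlinarith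
  rw [h1, h2]
  have := abs_sin_nat_mul_le' n (x/2)
  have h3 : Real.sin (n*(x/2))^2 ≤ ((n:ℝ) * |Real.sin (x/2)|)^2 := by
    rw [← sq_abs]
    exact pow_le_pow_left₀ (abs_nonneg _) this 2
  have h4 : ((n:ℝ) * |Real.sin (x/2)|)^2 = (n:ℝ)^2 * Real.sin (x/2)^2 := by
    rw [mul_pow, sq_abs]
  nlinarith

open Real in
/-- Positivity condition for a cyclic model with one additional coupling at distance `k`. -/
theorem single_long_range_coupling_nonneg (k : ℕ) (hk : 2 ≤ k) (g1 gk : ℝ)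
    (hg1 : 0 < g1) (h : (k : ℝ)^2 * gk / g1 ≥ -1) :
    ∀ x ∈ Set.Icc (0:ℝ) 1,
      0 ≤ g1 * (1 - Real.cos (2 * π * x)) + gk * (1 - Real.cos (2 * π * k * x)) := by
  intro x _
  have hg : -g1 ≤ (k : ℝ)^2 * gk := by
    rw [ge_iff_le, le_div_iff₀ hg1] at h
    linarith
  have hxk : 2 * π * k * x = k * (2 * π * x) := by ring
  have key := one_sub_cos_nat_mul_le k (2 * π * x)
  rw [hxk]
  have hc1 := Real.cos_le_one (2 * π * x)
  have hc2 := Real.cos_le_one ((k:ℝ) * (2 * π * x))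
  rcases le_or_gt 0 gk with hgk | hgk
  · nlinarith
  · nlinarith
end

section
/- Let n ≥ 4 be even and suppose g_1 > 0 and g_k ≤ 0 for 2 ≤ k ≤ n/2, with g_1 > π² ∑_{k=2}^{n/2} k² |g_k|. Then for every m with 1 ≤ m ≤ n/2, the eigenvalue λ_m = 2g_1(1 - cos(2πm/(n+1))) + 2∑_{k=2}^{n/2} g_k(1 - cos(2πmk/(n+1))) is strictly positive. -/
open Real in
/-- Strict positivity of the nonzero-mode eigenvalues of a cyclic polymer model with
long range repulsive couplings dominated by the nearest-neighbor attraction. -/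
theorem long_range_repulsive_spectrum_pos (n : ℕ) (hn : 4 ≤ n) (hne : Even n)
    (g : ℕ → ℝ) (hg1 : 0 < g 1) (hgk : ∀ k, 2 ≤ k → k ≤ n / 2 → g k ≤ 0)
    (hdom : π^2 * ∑ k ∈ Finset.Icc 2 (n / 2), (k : ℝ)^2 * |g k| < g 1)
    (lam : ℕ → ℝ)
    (hlam : ∀ m, lam m = 2 * g 1 * (1 - Real.cos (2 * π * m / (n+1)))
        + 2 * ∑ k ∈ Finset.Icc 2 (n / 2), g k * (1 - Real.cos (2 * π * m * k / (n+1)))) :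
    ∀ m : ℕ, 1 ≤ m → m ≤ n / 2 → 0 < lam m := by
  intro m hm1 hm2
  have hπ : (0:ℝ) < π := Real.pi_pos
  have hπ2 : (0:ℝ) < π ^ 2 := by positivity
  have hn1 : (0:ℝ) < (n:ℝ) + 1 := by positivity
  have hmpos : (0:ℝ) < (m:ℝ) := by exact_mod_cast hm1
  set θ : ℝ := 2 * π * m / (n + 1) with hθdef
  have hθpos : 0 < θ := by positivity
  have h2m : 2 * m ≤ n := by
    obtain ⟨t, rfl⟩ := hne
    omega
  have h2m' : 2 * (m:ℝ) ≤ (n:ℝ) := by exact_mod_cast h2m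
  have hθle : θ ≤ π := by
    rw [hθdef, div_le_iff₀ hn1]
    nlinarith
  -- lower bound for the nearest-neighbor term
  have hA := Real.cos_le_one_sub_mul_cos_sq (x := θ)
    (by rw [abs_of_nonneg hθpos.le]; exact hθle)
  have hA' : 2 * θ ^ 2 ≤ (1 - Real.cos θ) * π ^ 2 := by
    have h : 2 / π ^ 2 * θ ^ 2 ≤ 1 - Real.cos θ := by linarith
    calc 2 * θ ^ 2 = 2 / π ^ 2 * θ ^ 2 * π ^ 2 := by field_simp
      _ ≤ (1 - Real.cos θ) * π ^ 2 := mul_le_mul_of_nonneg_right h hπ2.le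
  -- lower bound for each long-range term
  have hterm : ∀ k ∈ Finset.Icc 2 (n / 2),
      -((k:ℝ)^2 * |g k| * θ ^ 2) ≤ 2 * (g k * (1 - Real.cos (θ * k))) := by
    intro k hk
    rw [Finset.mem_Icc] at hk
    have hgk' : g k ≤ 0 := hgk k hk.1 hk.2
    rw [abs_of_nonpos hgk']
    have h1 : 1 - (θ * k) ^ 2 / 2 ≤ Real.cos (θ * k) := Real.one_sub_sq_div_two_le_cos
    nlinarith [mul_nonneg (neg_nonneg.2 hgk') (by nlinarith : (0:ℝ) ≤ (θ * k) ^ 2 / 2 - (1 - Real.cos (θ * k)))]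
  have hsum : -(θ ^ 2) * ∑ k ∈ Finset.Icc 2 (n / 2), (k:ℝ)^2 * |g k|
      ≤ 2 * ∑ k ∈ Finset.Icc 2 (n / 2), g k * (1 - Real.cos (2 * π * m * k / (n+1))) := by
    have harg : ∀ k ∈ Finset.Icc 2 (n / 2),
        g k * (1 - Real.cos (2 * π * m * k / (n+1))) = g k * (1 - Real.cos (θ * k)) := by
      intro k _
      congr 3
      rw [hθdef]
      ring
    rw [Finset.sum_congr rfl harg, Finset.mul_sum, Finset.mul_sum]
    apply Finset.sum_le_sum
    intro k hk
    have := hterm k hk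
    nlinarith [this]
  set S : ℝ := ∑ k ∈ Finset.Icc 2 (n / 2), (k:ℝ)^2 * |g k| with hS
  have hθ2 : 0 < θ ^ 2 := by positivity
  rw [hlam]
  nlinarith [mul_le_mul_of_nonneg_left hA' hg1.le,
    mul_le_mul_of_nonneg_left hsum hπ2.le,
    mul_lt_mul_of_pos_left hdom hθ2,
    mul_pos hg1 hθ2, hπ2]
end
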